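/- For t ∈ K, the upper unitriangular matrix a(t) = [[1,t],[0,1]] normalizes SL₂(L) (i.e. a(t)·SL₂(L)·a(t)⁻¹ = SL₂(L)) if and only if t ∈ L. -/

import Mathlib

open Matrix Pointwise

noncomputable section

variable {K : Type*} [Field K]

abbrev SL2 (K : Type*) [Field K] := Matrix.SpecialLinearGroup (Fin 2) K

/-- `a(t) = [[1,t],[0,1]]`. -/
def aMat (t : K) : SL2 K :=
  ⟨!![1, t; 0, 1], by simp [Matrix.det_fin_two_of]⟩

/-- `b(t) = [[1,0],[t,1]]`. -/
def bMat (t : K) : SL2 K :=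
  ⟨!![1, 0; t, 1], by simp [Matrix.det_fin_two_of]⟩

/-- `diag(s) = [[s,0],[0,s⁻¹]]`. -/
def diagMat (s : Kˣ) : SL2 K :=
  ⟨!![(s : K), 0; 0, ((s⁻¹ : Kˣ) : K)], by simp [Matrix.det_fin_two_of]⟩

/-- `w = [[0,1],[1,0]]`, in `SL₂` since `char K = 2`. -/
def wMat (K : Type*) [Field K] [CharP K 2] : SL2 K :=
  ⟨!![0, 1; 1, 0], by simp [Matrix.det_fin_two_of, CharTwo.neg_eq]⟩

def setA (L : AddSubgroup K) : Set (SL2 K) := {g | ∃ t ∈ L, g = aMat t}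

def setAop (L : AddSubgroup K) : Set (SL2 K) := {g | ∃ t ∈ L, g = bMat t}

/-- Timmesfeld's `SL₂(L)`. -/
def SL2L (L : AddSubgroup K) : Subgroup (SL2 K) := Subgroup.closure (setA L ∪ setAop L)

/-- The subgroup of `Kˣ` generated by the nonzero elements of `L`. -/
def Tgen (L : AddSubgroup K) : Subgroup Kˣ := Subgroup.closure {u : Kˣ | (u : K) ∈ L}

def setTL (L : AddSubgroup K) : Set (SL2 K) := {g | ∃ s ∈ Tgen L, g = diagMat s}

def setTK (K : Type*) [Field K] : Set (SL2 K) := {g | ∃ s : Kˣ, g = diagMat s}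

def setB (L : AddSubgroup K) : Set (SL2 K) := setTL L * setA L


/-!
`SL₂(L)` acts on `ℙ¹(K)` by Möbius transformations and preserves `L ∪ {∞}`: `a(t)` is the
translation by `t`, and `b(t)` is translation by `t` conjugated by the inversion `x ↦ x⁻¹`,
which maps `L ∪ {∞}` to itself because `x⁻¹ = (x⁻¹)² x`. Hence `g · ∞ ∈ L ∪ {∞}` for all
`g ∈ SL₂(L)`. If `a(t)` normalizes `SL₂(L)`, then `a(t) b(1) a(t)⁻¹ ∈ SL₂(L)` sends `∞`
to `1 + t`, so `t ∈ L`; conversely `a(t) ∈ SL₂(L)` for `t ∈ L`.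
-/

theorem Subgroup.image_conj_eq_self_of_mem {G : Type*} [Group G] {H : Subgroup G} {x : G}
    (hx : x ∈ H) : (fun g => x * g * x⁻¹) '' (H : Set G) = H := by
  simpa [Subgroup.coe_pointwise_smul, ← Set.image_smul, MulAut.smul_def] using
    congrArg (fun S : Subgroup G => (S : Set G)) (Subgroup.conj_smul_eq_self_of_mem hx)

lemma AddSubgroup.inv_mem_of_sq_mul_mem {L : AddSubgroup K}
    (hvs : ∀ s t : K, t ∈ L → s ^ 2 * t ∈ L) {x : K} (hx : x ∈ L) : x⁻¹ ∈ L := by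
  rcases eq_or_ne x 0 with rfl | hx0
  · simp
  · simpa [sq, mul_assoc, inv_mul_cancel₀ hx0] using hvs x⁻¹ x hx

lemma coe_aMat (t : K) : (aMat t : Matrix (Fin 2) (Fin 2) K) = !![1, t; 0, 1] := rfl

lemma coe_bMat (t : K) : (bMat t : Matrix (Fin 2) (Fin 2) K) = !![1, 0; t, 1] := rfl

lemma aMat_add (s t : K) : aMat (s + t) = aMat s * aMat t := by
  ext : 1
  simp [coe_aMat, Matrix.SpecialLinearGroup.coe_mul, add_comm]

lemma bMat_add (s t : K) : bMat (s + t) = bMat s * bMat t := by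
  ext : 1
  simp [coe_bMat, Matrix.SpecialLinearGroup.coe_mul]

lemma aMat_zero : aMat (0 : K) = 1 := by
  ext : 1
  simp [coe_aMat, Matrix.one_fin_two]

lemma bMat_zero : bMat (0 : K) = 1 := by
  ext : 1
  simp [coe_bMat, Matrix.one_fin_two]

lemma aMat_inv (t : K) : (aMat t)⁻¹ = aMat (-t) := by
  rw [inv_eq_iff_mul_eq_one, ← aMat_add, add_neg_cancel, aMat_zero]

lemma bMat_inv (t : K) : (bMat t)⁻¹ = bMat (-t) := by
  rw [inv_eq_iff_mul_eq_one, ← bMat_add, add_neg_cancel, bMat_zero]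

lemma aMat_mulVec (t : K) (v : Fin 2 → K) :
    (aMat t : Matrix (Fin 2) (Fin 2) K) *ᵥ v = ![v 0 + t * v 1, v 1] := by
  ext i
  fin_cases i <;> simp [coe_aMat, vecHead, vecTail]

lemma bMat_mulVec (t : K) (v : Fin 2 → K) :
    (bMat t : Matrix (Fin 2) (Fin 2) K) *ᵥ v = ![v 0, t * v 0 + v 1] := by
  ext i
  fin_cases i <;> simp [coe_bMat, vecHead, vecTail]

/-- The cone over `L ∪ {∞} ⊆ ℙ¹(K)`: the junk value `x / 0 = 0 ∈ L` accounts for `∞`. -/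
def ratioSet (L : AddSubgroup K) : Set (Fin 2 → K) := {v | v 0 / v 1 ∈ L}

section ratioSet

variable {L : AddSubgroup K}

lemma mapsTo_aMat_ratioSet {t : K} (ht : t ∈ L) :
    Set.MapsTo ((aMat t : Matrix (Fin 2) (Fin 2) K) *ᵥ ·) (ratioSet L) (ratioSet L) := by
  intro v (hv : v 0 / v 1 ∈ L)
  simp only [aMat_mulVec]
  show (v 0 + t * v 1) / v 1 ∈ L
  rcases eq_or_ne (v 1) 0 with h | h
  · simp [h]
  · rw [add_div, mul_div_cancel_right₀ t h]
    exact L.add_mem hv ht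

lemma mapsTo_bMat_ratioSet (hinv : ∀ x ∈ L, x⁻¹ ∈ L) {t : K} (ht : t ∈ L) :
    Set.MapsTo ((bMat t : Matrix (Fin 2) (Fin 2) K) *ᵥ ·) (ratioSet L) (ratioSet L) := by
  intro v (hv : v 0 / v 1 ∈ L)
  simp only [bMat_mulVec]
  show v 0 / (t * v 0 + v 1) ∈ L
  rcases eq_or_ne (v 0) 0 with h | h
  · simp [h]
  · rw [show v 0 / (t * v 0 + v 1) = (t + (v 0 / v 1)⁻¹)⁻¹ by
      rw [inv_div, add_div' _ _ _ h, inv_div]]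
    exact hinv _ (L.add_mem ht (hinv _ hv))

lemma mapsTo_ratioSet_of_mem_SL2L (hinv : ∀ x ∈ L, x⁻¹ ∈ L) {g : SL2 K}
    (hg : g ∈ SL2L L) :
    Set.MapsTo ((g : Matrix (Fin 2) (Fin 2) K) *ᵥ ·) (ratioSet L) (ratioSet L) := by
  induction hg using Subgroup.closure_induction'' with
  | mem x hx =>
    rcases hx with ⟨t, ht, rfl⟩ | ⟨t, ht, rfl⟩
    · exact mapsTo_aMat_ratioSet ht
    · exact mapsTo_bMat_ratioSet hinv ht
  | inv_mem x hx =>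
    rcases hx with ⟨t, ht, rfl⟩ | ⟨t, ht, rfl⟩
    · exact aMat_inv t ▸ mapsTo_aMat_ratioSet (L.neg_mem ht)
    · exact bMat_inv t ▸ mapsTo_bMat_ratioSet hinv (L.neg_mem ht)
  | one => exact fun v hv => by simpa using hv
  | mul x y _ _ hx hy =>
    intro v hv
    simp only [Matrix.SpecialLinearGroup.coe_mul, ← Matrix.mulVec_mulVec]
    exact hx (hy hv)

end ratioSet

lemma aMat_mem_SL2L {L : AddSubgroup K} {t : K} (ht : t ∈ L) : aMat t ∈ SL2L L :=
  Subgroup.subset_closure (Or.inl ⟨t, ht, rfl⟩)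

lemma bMat_mem_SL2L {L : AddSubgroup K} {t : K} (ht : t ∈ L) : bMat t ∈ SL2L L :=
  Subgroup.subset_closure (Or.inr ⟨t, ht, rfl⟩)

lemma aMat_mul_bMat_one_mul_inv_mulVec (t : K) :
    ((aMat t * bMat 1 * (aMat t)⁻¹ : SL2 K) : Matrix (Fin 2) (Fin 2) K) *ᵥ ![1, 0] =
      ![1 + t, 1] := by
  simp only [aMat_inv, Matrix.SpecialLinearGroup.coe_mul, ← Matrix.mulVec_mulVec, aMat_mulVec,
    bMat_mulVec]
  simp [add_comm]

theorem aMat_normalizes_SL2L_iff_general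
    (L : AddSubgroup K) (hsq : ∀ x : K, x ^ 2 ∈ L)
    (hvs : ∀ s t : K, t ∈ L → s ^ 2 * t ∈ L) :
    ∀ t : K,
      (fun g => aMat t * g * (aMat t)⁻¹) '' (SL2L L : Set (SL2 K)) = (SL2L L : Set (SL2 K)) ↔
        t ∈ L := by
  intro t
  refine ⟨fun hnorm => ?_, fun ht => Subgroup.image_conj_eq_self_of_mem (aMat_mem_SL2L ht)⟩
  have h1 : (1 : K) ∈ L := by simpa using hsq 1
  have hconj : aMat t * bMat 1 * (aMat t)⁻¹ ∈ (SL2L L : Set (SL2 K)) :=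
    hnorm ▸ ⟨bMat 1, bMat_mem_SL2L h1, rfl⟩
  have hinfty : (![1, 0] : Fin 2 → K) ∈ ratioSet L := by simp [ratioSet]
  have himage : ((aMat t * bMat 1 * (aMat t)⁻¹ : SL2 K) : Matrix (Fin 2) (Fin 2) K) *ᵥ ![1, 0]
      ∈ ratioSet L :=
    mapsTo_ratioSet_of_mem_SL2L (fun _ => AddSubgroup.inv_mem_of_sq_mul_mem hvs) hconj hinfty
  rw [aMat_mul_bMat_one_mul_inv_mulVec] at himage
  have h1t : 1 + t ∈ L := by simpa [ratioSet] using himage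
  simpa using L.sub_mem h1t h1

/-- For `t ∈ K`, the unitriangular matrix `a(t)` normalizes `SL₂(L)` iff `t ∈ L`. -/
theorem aMat_normalizes_SL2L_iff
    [CharP K 2] (himperf : ¬ Function.Surjective fun x : K => x ^ 2)
    (L : AddSubgroup K) (hsq : ∀ x : K, x ^ 2 ∈ L)
    (hvs : ∀ s t : K, t ∈ L → s ^ 2 * t ∈ L) :
    ∀ t : K,
      (fun g => aMat t * g * (aMat t)⁻¹) '' (SL2L L : Set (SL2 K)) = (SL2L L : Set (SL2 K)) ↔
        t ∈ L :=
  aMat_normalizes_SL2L_iff_general L hsq hvs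

end
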